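/- For every g-tuple X = (X_1,…,X_g) of k×k complex matrices and every g-tuple U = (U_1,…,U_g) of d×d complex matrices, det(I_k ⊗ I_d + Σ_{j=1}^g X_j ⊗ U_j) = Σ_{n=0}^{kd} (1/n!) Σ_{α ∈ ℕ^g, |α| = n} binom(n,α) Σ_{σ ∈ S_n} sgn(σ) · p_{σ,α}(X) · p_{σ,α}(U). -/

import Mathlib

open Matrix
open scoped Kronecker

noncomputable section

/-- `partialSum α j = α₀ + ⋯ + α_{j-1}` (out-of-range parts count as `0`). -/
def partialSum {g : ℕ} (α : Fin g → ℕ) (j : ℕ) : ℕ :=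
  ∑ t ∈ Finset.range j, if h : t < g then α ⟨t, h⟩ else 0

/-- The index `j(i)` of the block of the multi-index `α` containing position `i`
(`0`-indexed): the unique `j` with `α₀ + ⋯ + α_{j-1} ≤ i < α₀ + ⋯ + α_j`, whenever
`i < |α|`. -/
def blockIdx {g : ℕ} (α : Fin g → ℕ) (i : ℕ) : ℕ :=
  ((Finset.range g).filter fun j => partialSum α (j + 1) ≤ i).card

/-- The matrix `A_{j(i)}` attached to position `i` by the multi-index `α`. -/
def blockMat {g m : ℕ} (α : Fin g → ℕ) (A : Fin g → Matrix (Fin m) (Fin m) ℂ) (i : ℕ) :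
    Matrix (Fin m) (Fin m) ℂ :=
  if h : blockIdx α i < g then A ⟨blockIdx α i, h⟩ else 1

/-- The tensor power `A₁^{⊗α₁} ⊗ ⋯ ⊗ A_g^{⊗α_g}`, as a matrix indexed by functions
`Fin n → Fin m`; its `(f, h)` entry is `Π_{i} (A_{j(i)})_{f i, h i}`. -/
def tensorPow (g m n : ℕ) (α : Fin g → ℕ) (A : Fin g → Matrix (Fin m) (Fin m) ℂ) :
    Matrix (Fin n → Fin m) (Fin n → Fin m) ℂ :=
  Matrix.of fun f h => ∏ i : Fin n, blockMat α A (i : ℕ) (f i) (h i)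

/-- The matrix of the operator permuting the tensor factors of `(ℂ^m)^{⊗n}` according to
`σ`: its `(f, h)` entry is `1` if `h = f ∘ σ` and `0` otherwise. -/
def permMat (m n : ℕ) (σ : Equiv.Perm (Fin n)) :
    Matrix (Fin n → Fin m) (Fin n → Fin m) ℂ :=
  Matrix.of fun f h => if h = f ∘ σ then 1 else 0

/-- The generalized power-sum trace monomial
`p_{σ,α}(A) = tr(ρ(σ⁻¹) ∘ A₁^{⊗α₁} ⊗ ⋯ ⊗ A_g^{⊗α_g})`,
equal to the product over the disjoint cycles `(i₁ ⋯ i_ℓ)` of `σ` (fixed points counted as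
`1`-cycles) of `tr(A_{j(i₁)} ⋯ A_{j(i_ℓ)})`. -/
def pPoly {g : ℕ} (m n : ℕ) (σ : Equiv.Perm (Fin n)) (α : Fin g → ℕ)
    (A : Fin g → Matrix (Fin m) (Fin m) ℂ) : ℂ :=
  Matrix.trace (permMat m n σ⁻¹ * tensorPow g m n α A)

/-!
Expanding `det (1 + M)` row by row gives the sum of all principal minors of `M`, and
`n! · Σ_{|S| = n} det M_S = Σ_{f : [n] → ι} det M_{f,f} = Σ_σ sgn σ · tr(ρ(σ) ∘ M^{⊗n})`,
because non-injective `f` contribute nothing. For `M = Σⱼ Xⱼ ⊗ Uⱼ` the trace is multilinear and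
factors over Kronecker products, so the inner sum becomes a sum over words `j : [n] → [g]` of
`Σ_σ sgn σ · p_σ(X ∘ j) · p_σ(U ∘ j)`. Permuting the letters of `j` conjugates `σ`, so this only
depends on the content `α` of `j`, and exactly `binom(n, α)` words have content `α`.
-/

open Finset Equiv

section FiberCard

variable {α β : Type*} [Fintype α] [DecidableEq β]

def fiberCard (j : α → β) (b : β) : ℕ := Fintype.card {a // j a = b}

theorem sum_fiberCard [Fintype β] (j : α → β) : ∑ b, fiberCard j b = Fintype.card α :=
  (Fintype.card_sigma (α := fun b => {a // j a = b})).symm.trans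
    (Fintype.card_congr (sigmaFiberEquiv j))

theorem fiberCard_comp_perm (j : α → β) (τ : Perm α) : fiberCard (j ∘ τ) = fiberCard j :=
  funext fun _ => Fintype.card_congr (τ.subtypeEquiv fun _ => Iff.rfl)

theorem exists_perm_comp_eq_of_fiberCard_eq {j j' : α → β} (h : fiberCard j = fiberCard j') :
    ∃ τ : Perm α, j ∘ τ = j' :=
  ⟨ofFiberEquiv fun b => Fintype.equivOfCardEq (congrFun h b).symm,
    funext (ofFiberEquiv_map _)⟩

variable [DecidableEq α] [Fintype β]

/-- The permutations carrying `j₀` to `j` form a coset of the stabiliser of `j`. -/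
theorem card_filter_perm_comp_eq (j₀ j : α → β) (h : fiberCard j = fiberCard j₀) :
    #{τ : Perm α | j₀ ∘ τ = j} = ∏ b, (fiberCard j₀ b).factorial := by
  obtain ⟨τ₀, rfl⟩ := exists_perm_comp_eq_of_fiberCard_eq h.symm
  rw [← Fintype.card_subtype, ← fiberCard_comp_perm j₀ τ₀]
  simp only [fiberCard]
  rw [← DomMulAct.stabilizer_card]
  refine Fintype.card_congr ((Equiv.mulLeft τ₀⁻¹).subtypeEquiv fun τ => ?_)
  rw [coe_mulLeft, Function.comp_assoc, ← Perm.coe_mul, mul_inv_cancel_left]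

theorem card_filter_fiberCard_eq (j₀ : α → β) :
    #{j : α → β | fiberCard j = fiberCard j₀} = Nat.multinomial univ (fiberCard j₀) := by
  have hcount := card_eq_sum_card_fiberwise (s := (univ : Finset (Perm α)))
    (t := {j : α → β | fiberCard j = fiberCard j₀}) (f := fun τ : Perm α => j₀ ∘ τ)
    (fun τ _ => mem_filter.2 ⟨mem_univ _, fiberCard_comp_perm j₀ τ⟩)
  rw [sum_congr rfl fun j hj => card_filter_perm_comp_eq j₀ j (mem_filter.1 hj).2, sum_const,
    smul_eq_mul, card_univ, Fintype.card_perm, ← sum_fiberCard j₀, ← Nat.multinomial_spec,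
    mul_comm] at hcount
  exact (Nat.eq_of_mul_eq_mul_right (prod_pos fun b _ => (fiberCard j₀ b).factorial_pos)
    hcount).symm

end FiberCard

section BlockIndex

variable {g : ℕ} (α : Fin g → ℕ)

theorem partialSum_mono : Monotone (partialSum α) := fun _ _ h =>
  sum_le_sum_of_subset (range_subset_range.2 h)

theorem partialSum_succ {t : ℕ} (ht : t < g) :
    partialSum α (t + 1) = partialSum α t + α ⟨t, ht⟩ := by
  rw [partialSum, sum_range_succ, dif_pos ht, partialSum]

theorem partialSum_eq_sum : partialSum α g = ∑ t, α t := by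
  rw [partialSum, ← Fin.sum_univ_eq_sum_range]
  simp

theorem blockIdx_lt {i : ℕ} (hi : i < partialSum α g) : blockIdx α i < g := by
  obtain ⟨g, rfl⟩ := Nat.exists_eq_succ_of_ne_zero (n := g) (by rintro rfl; simp [partialSum] at hi)
  exact (card_lt_card (filter_ssubset.2 ⟨g, self_mem_range_succ g, hi.not_ge⟩)).trans_eq
    (card_range _)

theorem blockIdx_eq_of_mem_Ico {i t : ℕ} (ht : t < g)
    (hi : i ∈ Ico (partialSum α t) (partialSum α (t + 1))) : blockIdx α i = t := by
  rw [mem_Ico] at hi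
  rw [blockIdx, ← card_range t]
  congr 1
  ext j
  simp only [mem_filter, mem_range]
  constructor
  · rintro ⟨-, hj⟩
    by_contra! htj
    exact (hi.2.trans_le (partialSum_mono α (by omega))).not_ge hj
  · exact fun hjt => ⟨hjt.trans ht, (partialSum_mono α hjt).trans hi.1⟩

def blockIdxFin {n : ℕ} (h : ∑ t, α t = n) (i : Fin n) : Fin g :=
  ⟨blockIdx α i, blockIdx_lt α (by rw [partialSum_eq_sum, h]; exact i.2)⟩

/-- Block `t` contains the interval `[α₀ + ⋯ + α_{t-1}, α₀ + ⋯ + α_t)`, and both sides sum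
to `n`. -/
theorem fiberCard_blockIdxFin {n : ℕ} (h : ∑ t, α t = n) : fiberCard (blockIdxFin α h) = α := by
  have hle : ∀ t, α t ≤ fiberCard (blockIdxFin α h) t := fun t => by
    have hsub : partialSum α (t + 1) ≤ n := h ▸ partialSum_eq_sum α ▸ partialSum_mono α t.2
    calc α t = Fintype.card (Ico (partialSum α t) (partialSum α (t + 1))) := by
          simp [partialSum_succ α t.2]
      _ ≤ _ := Fintype.card_le_of_injective
          (fun x => ⟨⟨x, (mem_Ico.1 x.2).2.trans_le hsub⟩,
            Fin.ext (blockIdx_eq_of_mem_Ico α t.2 x.2)⟩)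
          fun x y hxy => Subtype.ext (congrArg (fun z => (z.1 : ℕ)) hxy)
  funext t
  refine ((sum_eq_sum_iff_of_le fun t _ => hle t).1 ?_ t (mem_univ t)).symm
  rw [sum_fiberCard, Fintype.card_fin, h]

theorem blockMat_eq {m n : ℕ} (h : ∑ t, α t = n) (A : Fin g → Matrix (Fin m) (Fin m) ℂ)
    (i : Fin n) : blockMat α A i = A (blockIdxFin α h i) :=
  dif_pos (blockIdxFin α h i).2

end BlockIndex

theorem sum_eq_sum_antidiagonalTuple_multinomial_smul {M : Type*} [AddCommMonoid M] {g n : ℕ}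
    (F : (Fin n → Fin g) → M) (G : (Fin g → ℕ) → M) (hFG : ∀ j, F j = G (fiberCard j)) :
    ∑ j, F j = ∑ α ∈ Nat.antidiagonalTuple g n, Nat.multinomial univ α • G α := by
  rw [← sum_fiberwise_of_maps_to (g := fiberCard) (t := Nat.antidiagonalTuple g n)
    fun j _ => Nat.mem_antidiagonalTuple.2 ((sum_fiberCard j).trans (Fintype.card_fin n))]
  refine sum_congr rfl fun α hα => ?_
  have hsum := Nat.mem_antidiagonalTuple.1 hα
  rw [sum_congr rfl fun j hj => (hFG j).trans (congrArg G (mem_filter.1 hj).2), sum_const]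
  conv_lhs => rw [← fiberCard_blockIdxFin α hsum, card_filter_fiberCard_eq]
  rw [fiberCard_blockIdxFin]

section PrincipalMinors

variable {ι R : Type*} [DecidableEq ι] [CommRing R]

def Function.Embedding.mapUnivEqEquiv {κ : Type*} [Fintype κ] (s : Finset ι) :
    {f : κ ↪ ι // univ.map f = s} ≃ (κ ≃ s) where
  toFun f := Equiv.ofBijective
    (fun k => ⟨f.1 k, (Finset.ext_iff.1 f.2 _).1 (mem_map_of_mem _ (mem_univ k))⟩)
    ⟨fun _ _ h => f.1.injective (congrArg Subtype.val h), fun y => by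
      obtain ⟨k, -, hk⟩ := mem_map.1 ((Finset.ext_iff.1 f.2 _).2 y.2)
      exact ⟨k, Subtype.ext hk⟩⟩
  invFun e := ⟨e.toEmbedding.trans (Function.Embedding.subtype _), by
    ext x
    simp only [mem_map, mem_univ, true_and]
    exact ⟨fun ⟨k, hk⟩ => hk ▸ (e k).2, fun hx => ⟨e.symm ⟨x, hx⟩, by simp⟩⟩⟩
  left_inv _ := rfl
  right_inv _ := Equiv.ext fun _ => rfl

namespace Matrix

theorem det_one_add_eq_sum_det_submatrix [Fintype ι] (M : Matrix ι ι R) :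
    det (1 + M) = ∑ s : Finset ι, det (M.submatrix (Subtype.val : s → ι) Subtype.val) := by
  simp_rw [← det_piecewise_one_eq_submatrix_det]
  rw [add_comm]
  exact detRowAlternating.map_add_univ M.row (row 1)

omit [DecidableEq ι] in
theorem det_submatrix_eq_zero_of_not_injective {κ : Type*} [Fintype κ] [DecidableEq κ]
    (M : Matrix ι ι R) {f : κ → ι} (hf : ¬ f.Injective) : det (M.submatrix f f) = 0 := by
  obtain ⟨a, b, hab, hne⟩ := Function.not_injective_iff.1 hf
  exact det_zero_of_row_eq hne (by funext j; simp [hab])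

/-- Non-injective `f` contribute `0`; the injective ones with image `s` are the `n!`
enumerations of `s`. -/
theorem sum_det_submatrix_eq_factorial_mul [Fintype ι] (M : Matrix ι ι R) (n : ℕ) :
    ∑ f : Fin n → ι, det (M.submatrix f f) =
      n.factorial *
        ∑ s ∈ univ.powersetCard n, det (M.submatrix (Subtype.val : s → ι) Subtype.val) := by
  rw [← Fintype.sum_of_injective _ DFunLike.coe_injective
    (fun f : Fin n ↪ ι => det (M.submatrix f f)) _
    (fun f hf => M.det_submatrix_eq_zero_of_not_injective fun h => hf ⟨⟨f, h⟩, rfl⟩) fun _ => rfl]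
  rw [← sum_fiberwise_of_maps_to (g := fun f : Fin n ↪ ι => univ.map f) (t := univ.powersetCard n)
    (fun f _ => by simp), mul_sum]
  refine sum_congr rfl fun s hs => ?_
  have e : Fin n ≃ s := Fintype.equivOfCardEq (by simpa using (mem_powersetCard.1 hs).2.symm)
  rw [sum_subtype _ (fun _ => mem_filter.trans (and_iff_right (mem_univ _))),
    ← (Function.Embedding.mapUnivEqEquiv s).symm.sum_comp]
  have hminor : ∀ e : Fin n ≃ s, det (M.submatrix ((Function.Embedding.mapUnivEqEquiv s).symm e).1
      ((Function.Embedding.mapUnivEqEquiv s).symm e).1) =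
        det (M.submatrix (Subtype.val : s → ι) Subtype.val) :=
    fun e => det_submatrix_equiv_self e (M.submatrix Subtype.val Subtype.val)
  simp only [hminor, sum_const, card_univ, Fintype.card_equiv e, Fintype.card_fin, nsmul_eq_mul]

theorem det_one_add_eq_sum_range [Fintype ι] {K : Type*} [Field K] [CharZero K]
    (M : Matrix ι ι K) :
    det (1 + M) = ∑ n ∈ range (Fintype.card ι + 1),
      (n.factorial : K)⁻¹ * ∑ f : Fin n → ι, det (M.submatrix f f) := by
  rw [det_one_add_eq_sum_det_submatrix, ← sum_fiberwise_of_maps_to (g := Finset.card)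
    (t := range (Fintype.card ι + 1)) (fun s _ => mem_range_succ_iff.2 s.card_le_univ)]
  refine sum_congr rfl fun n _ => ?_
  rw [sum_det_submatrix_eq_factorial_mul,
    inv_mul_cancel_left₀ (Nat.cast_ne_zero.2 n.factorial_ne_zero), powersetCard_eq_filter,
    powerset_univ]

end Matrix

end PrincipalMinors

namespace Matrix

section PermTrace

variable {κ ι R : Type*} [Fintype κ] [DecidableEq κ] [Fintype ι]

/-- `permTrace σ B = tr(ρ(σ⁻¹) ∘ B₁ ⊗ ⋯ ⊗ B_n)`. -/
def permTrace [CommSemiring R] (σ : Perm κ) (B : κ → Matrix ι ι R) : R :=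
  ∑ f : κ → ι, ∏ i, B i (f i) (f (σ i))

theorem permTrace_comp_perm [CommSemiring R] (σ τ : Perm κ) (B : κ → Matrix ι ι R) :
    permTrace σ (B ∘ τ) = permTrace (τ * σ * τ⁻¹) B := by
  refine Fintype.sum_equiv (τ.arrowCongr (Equiv.refl ι)) _ _ fun f => ?_
  conv_rhs => rw [← Equiv.prod_comp τ]
  simp [Perm.mul_apply]

theorem permTrace_kronecker [CommSemiring R] {ι' : Type*} [Fintype ι'] (σ : Perm κ)
    (B : κ → Matrix ι ι R) (C : κ → Matrix ι' ι' R) :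
    permTrace σ (fun i => B i ⊗ₖ C i) = permTrace σ B * permTrace σ C := by
  rw [permTrace, permTrace, permTrace, sum_mul_sum, ← Fintype.sum_prod_type']
  refine Fintype.sum_equiv (arrowProdEquivProdArrow _ _ _) _ _ fun f => ?_
  simp [kroneckerMap_apply, prod_mul_distrib]

theorem permTrace_sum [CommSemiring R] {T : Type*} [Fintype T] (σ : Perm κ)
    (W : κ → T → Matrix ι ι R) :
    permTrace σ (fun i => ∑ t, W i t) = ∑ j : κ → T, permTrace σ (fun i => W i (j i)) := by
  simp only [permTrace, sum_apply, Fintype.prod_sum]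
  exact sum_comm

variable [CommRing R]

def alternatingPermTrace (B : κ → Matrix ι ι R) : R :=
  ∑ σ : Perm κ, ((Perm.sign σ : ℤ) : R) * permTrace σ B

/-- Relabelling the factors conjugates `σ`, which preserves its sign. -/
theorem alternatingPermTrace_comp_perm (B : κ → Matrix ι ι R) (τ : Perm κ) :
    alternatingPermTrace (B ∘ τ) = alternatingPermTrace B := by
  refine Fintype.sum_equiv (MulAut.conj τ).toEquiv _ _ fun σ => ?_
  simp [permTrace_comp_perm, Perm.sign_mul, mul_right_comm _ (Perm.sign σ)]

theorem alternatingPermTrace_comp_eq_of_fiberCard_eq {β : Type*} [DecidableEq β]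
    (W : β → Matrix ι ι R) {j j' : κ → β} (h : fiberCard j = fiberCard j') :
    alternatingPermTrace (W ∘ j) = alternatingPermTrace (W ∘ j') := by
  obtain ⟨τ, rfl⟩ := exists_perm_comp_eq_of_fiberCard_eq h
  exact (alternatingPermTrace_comp_perm (W ∘ j) τ).symm

theorem alternatingPermTrace_sum {T : Type*} [Fintype T] (W : T → Matrix ι ι R) :
    alternatingPermTrace (fun _ : κ => ∑ t, W t) =
      ∑ j : κ → T, alternatingPermTrace (W ∘ j) := by
  simp only [alternatingPermTrace, permTrace_sum, mul_sum]
  exact sum_comm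

theorem alternatingPermTrace_const [DecidableEq ι] (M : Matrix ι ι R) :
    alternatingPermTrace (fun _ : κ => M) = ∑ f : κ → ι, det (M.submatrix f f) := by
  simp only [alternatingPermTrace, permTrace, mul_sum]
  refine sum_comm.trans (sum_congr rfl fun f _ => ?_)
  rw [← det_transpose, det_apply']
  rfl

end PermTrace

end Matrix

theorem pPoly_eq_permTrace {g m n : ℕ} (σ : Perm (Fin n)) (α : Fin g → ℕ) (h : ∑ t, α t = n)
    (A : Fin g → Matrix (Fin m) (Fin m) ℂ) :
    pPoly m n σ α A = permTrace σ (A ∘ blockIdxFin α h) := by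
  simp only [pPoly, Matrix.trace, Matrix.diag, Matrix.mul_apply, permMat, tensorPow, of_apply,
    ite_mul, one_mul, zero_mul, sum_ite_eq', mem_univ, if_true]
  refine Fintype.sum_equiv (σ.arrowCongr (Equiv.refl _)) _ _ fun f => ?_
  simp [blockMat_eq α h]

/-- **Lemma (homogeneous expansion of the pencil determinant).**
`det(I_k ⊗ I_d + Σⱼ Xⱼ ⊗ Uⱼ) = Σ_{n=0}^{kd} (1/n!) Σ_{|α|=n} binom(n,α)
  Σ_{σ ∈ S_n} sgn(σ) p_{σ,α}(X) p_{σ,α}(U)`. -/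
theorem pencil_det_expansion (g k d : ℕ)
    (X : Fin g → Matrix (Fin k) (Fin k) ℂ) (U : Fin g → Matrix (Fin d) (Fin d) ℂ) :
    Matrix.det (1 + ∑ j, X j ⊗ₖ U j) =
      ∑ n ∈ Finset.range (k * d + 1), (n.factorial : ℂ)⁻¹ *
        ∑ α ∈ Finset.Nat.antidiagonalTuple g n, (Nat.multinomial Finset.univ α : ℂ) *
          ∑ σ : Equiv.Perm (Fin n), ((Equiv.Perm.sign σ : ℤ) : ℂ) *
            (pPoly k n σ α X * pPoly d n σ α U) := by
  rw [det_one_add_eq_sum_range, Fintype.card_prod, Fintype.card_fin, Fintype.card_fin]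
  refine sum_congr rfl fun n _ => congrArg _ ?_
  simp_rw [← alternatingPermTrace_const, alternatingPermTrace_sum, ← nsmul_eq_mul]
  refine sum_eq_sum_antidiagonalTuple_multinomial_smul _ _ fun j => ?_
  have hj : ∑ t, fiberCard j t = n := (sum_fiberCard j).trans (Fintype.card_fin n)
  simp_rw [pPoly_eq_permTrace _ _ hj, ← permTrace_kronecker]
  exact alternatingPermTrace_comp_eq_of_fiberCard_eq _ (fiberCard_blockIdxFin _ hj).symm
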